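/- arXiv:1412.5718 — 6 statements merged into one kernel-verified Lean document; each statement's English description precedes it below -/
import Mathlib

section
/- Let R be an n×n matrix with I - R invertible and F = (I - R)^{-1}, and fix s with F_{ss} ≠ 0. Let R' be R with row and column s deleted, B' the column of R restricted to indices j ≠ s given by B'_j = R_{js}, and F' = (I - R')^{-1}. Then the absorption probability into s satisfies, for every i ≠ s: (F'·B')_i = F_{is} / F_{ss}. -/
/-- Absorption probability into a new absorbing node `s`.
With `F = (I-R)⁻¹`, `F s s ≠ 0`, `R'` the matrix `R` with row and column `s`
deleted, `B'` the column of `R` toward `s` (restricted to indices `j ≠ s`),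
and `F' = (I-R')⁻¹`, we have `(F'·B') i = F i s / F s s` for every `i ≠ s`. -/
theorem absorption_probability_ratio (n : ℕ) (R : Matrix (Fin n) (Fin n) ℝ)
    (hu : IsUnit (1 - R)) (F : Matrix (Fin n) (Fin n) ℝ) (hF : F = (1 - R)⁻¹)
    (s : Fin n) (hss : F s s ≠ 0)
    (R' : Matrix {i : Fin n // i ≠ s} {i : Fin n // i ≠ s} ℝ)
    (hR' : R' = R.submatrix Subtype.val Subtype.val)
    (hu' : IsUnit (1 - R'))
    (F' : Matrix {i : Fin n // i ≠ s} {i : Fin n // i ≠ s} ℝ)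
    (hF' : F' = (1 - R')⁻¹)
    (B' : {i : Fin n // i ≠ s} → ℝ) (hB' : ∀ j, B' j = R j.val s) :
    ∀ i : {i : Fin n // i ≠ s}, F'.mulVec B' i = F i.val s / F s s := by
  set x : {i : Fin n // i ≠ s} → ℝ := fun i => F i.val s / F s s with hx
  -- (1-R) * F = 1
  have hdet : IsUnit (1 - R).det := (Matrix.isUnit_iff_isUnit_det _).mp hu
  have hmul : (1 - R) * F = 1 := by
    rw [hF]; exact Matrix.mul_nonsing_inv _ hdet
  -- entrywise: for i ≠ s, F i s = ∑ j, R i j * F j s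
  have hkey : ∀ i : Fin n, i ≠ s → F i s = ∑ j, R i j * F j s := by
    intro i hi
    have h1 : ((1 - R) * F) i s = (0 : ℝ) := by
      rw [hmul, Matrix.one_apply_ne hi]
    rw [Matrix.mul_apply] at h1
    have h2 : ∑ j, ((1 : Matrix (Fin n) (Fin n) ℝ) i j - R i j) * F j s = 0 := by
      simpa [Matrix.sub_apply] using h1
    have h3 : (∑ j, (1 : Matrix (Fin n) (Fin n) ℝ) i j * F j s)
        - ∑ j, R i j * F j s = 0 := by
      rw [← Finset.sum_sub_distrib]
      simpa [sub_mul] using h2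
    have h4 : ∑ j, (1 : Matrix (Fin n) (Fin n) ℝ) i j * F j s = F i s := by
      simp [Matrix.one_apply, Finset.sum_ite_eq]
    rw [h4] at h3
    linarith
  -- (1 - R') .mulVec x = B'
  have hsolve : (1 - R').mulVec x = B' := by
    funext i
    have hsum : ∑ j, R i.val j * F j s
        = R i.val s * F s s + ∑ j : {j : Fin n // j ≠ s}, R i.val j.val * F j.val s := by
      rw [← Finset.sum_subtype (({s}ᶜ : Finset (Fin n))) (by simp) 
            (fun j => R i.val j * F j s)]
      rw [← Finset.sum_compl_add_sum ({s} : Finset (Fin n)) (fun j => R i.val j * F j s)]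
      rw [Finset.sum_singleton]
      ring
    have hFi := hkey i.val i.prop
    rw [hsum] at hFi
    have hxdef : ∀ j : {j : Fin n // j ≠ s}, x j = F j.val s / F s s := fun j => rfl
    rw [Matrix.mulVec, dotProduct]
    simp only [Matrix.sub_apply, Matrix.one_apply, sub_mul, hR', Matrix.submatrix_apply]
    rw [Finset.sum_sub_distrib]
    have h4 : ∑ j : {j : Fin n // j ≠ s}, (if i = j then (1:ℝ) else 0) * x j = x i := by
      simp [Finset.sum_ite_eq]
    rw [h4, hB']
    have : x i = R i.val s + ∑ j : {j : Fin n // j ≠ s}, R i.val j.val * x j := by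
      rw [hx]
      simp only [hxdef]
      field_simp
      rw [hFi]
      ring_nf
      congr 1
      rw [Finset.mul_sum]
      apply Finset.sum_congr rfl
      intro j _
      field_simp
    rw [this]; ring
  -- conclude
  intro i
  have hdet' : IsUnit (1 - R').det := (Matrix.isUnit_iff_isUnit_det _).mp hu'
  have : F'.mulVec B' = x := by
    rw [← hsolve, Matrix.mulVec_mulVec, hF', Matrix.nonsing_inv_mul _ hdet',
      Matrix.one_mulVec]
  rw [this]
end

section
/- Let R be an n×n nonnegative matrix whose row sums are all at most 1, and suppose that from every index i there is a finite sequence i = i_0, i_1, …, i_k with R_{i_{j-1} i_j} > 0 and the row sum of R at i_k strictly less than 1. Then the spectral radius of R satisfies ρ(R) < 1, so I - R is invertible. -/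
/-!
If every state can reach a leaking row along positive entries, then after `m` steps, with `m`
exceeding all the path lengths, every row of `R ^ m` has lost some mass: all row sums of `R ^ m`
are `< 1`. Row sums are non-increasing in the power, because the row sums of `R` are at most `1`.
Hence `‖R ^ m‖ < 1` in the `ℓ∞` operator norm (the maximal absolute row sum), and
`ρ(R) ^ m ≤ ρ(R ^ m) ≤ ‖R ^ m‖` gives `ρ(R) < 1`; in particular `1` is not in the spectrum,
so `1 - R` is invertible.
-/

open Finset
open scoped ENNReal NNReal Matrix.Norms.Operator

section Spectral

variable {𝕜 A : Type*} [NormedField 𝕜] [NormedRing A] [NormedAlgebra 𝕜 A]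

theorem spectralRadius_lt_one_of_nnnorm_pow_lt_one [CompleteSpace A] (h1 : ‖(1 : A)‖₊ ≤ 1)
    {a : A} {m : ℕ} (hm : m ≠ 0) (ha : ‖a ^ m‖₊ < 1) : spectralRadius 𝕜 a < 1 := by
  have hpow : spectralRadius 𝕜 (a ^ m) ≤ ‖a ^ m‖₊ := by
    refine iSup₂_le fun k hk => ENNReal.coe_le_coe.mpr ?_
    calc ‖k‖₊ ≤ ‖a ^ m‖₊ * ‖(1 : A)‖₊ := spectrum.norm_le_norm_mul_of_mem hk
      _ ≤ ‖a ^ m‖₊ := mul_le_of_le_one_right zero_le h1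
  rw [← pow_lt_one_iff hm]
  calc spectralRadius 𝕜 a ^ m ≤ spectralRadius 𝕜 (a ^ m) := spectrum.spectralRadius_pow_le a m hm
    _ ≤ ‖a ^ m‖₊ := hpow
    _ < 1 := mod_cast ha

theorem isUnit_one_sub_of_spectralRadius_lt_one {a : A} (ha : spectralRadius 𝕜 a < 1) :
    IsUnit (1 - a) := by
  have : (1 : 𝕜) ∈ resolventSet 𝕜 a :=
    spectrum.mem_resolventSet_of_spectralRadius_lt (by simpa using ha)
  simpa [spectrum.mem_resolventSet_iff] using this

end Spectral

namespace Matrix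

variable {ι α : Type*} [Fintype ι] [DecidableEq ι]

theorem isUnit_of_isUnit_map {K L : Type*} [Field K] [CommRing L] [Nontrivial L] (f : K →+* L)
    {M : Matrix ι ι K} (h : IsUnit (M.map f)) : IsUnit M := by
  rw [isUnit_iff_isUnit_det, show (M.map f).det = f M.det from (f.map_det M).symm] at h
  exact (isUnit_iff_isUnit_det M).mpr ((isUnit_map_iff f _).mp h)

omit [Fintype ι] [DecidableEq ι] in
theorem sum_mul_apply {κ ν : Type*} [Fintype κ] [Fintype ν] [NonUnitalNonAssocSemiring α]
    (S : Matrix ι κ α) (T : Matrix κ ν α) (i : ι) :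
    ∑ j, (S * T) i j = ∑ l, S i l * ∑ j, T l j := by
  simp_rw [mul_apply, mul_sum]
  exact sum_comm

section OrderedSemiring

variable [Semiring α] [PartialOrder α] [IsStrictOrderedRing α] {R : Matrix ι ι α}

theorem pow_apply_pos_of_path (hR : ∀ i j, 0 ≤ R i j) {k : ℕ} (p : Fin (k + 1) → ι)
    (hp : ∀ j : Fin k, 0 < R (p j.castSucc) (p j.succ)) :
    0 < (R ^ k) (p 0) (p (Fin.last k)) := by
  induction k with
  | zero => simp
  | succ k ih =>
    have hinit : 0 < (R ^ k) (p 0) (p (Fin.last k).castSucc) :=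
      ih (Fin.init p) fun j => by simpa [Fin.init] using hp j.castSucc
    rw [pow_succ, mul_apply]
    calc 0 < (R ^ k) (p 0) (p (Fin.last k).castSucc) *
          R (p (Fin.last k).castSucc) (p (Fin.last _)) := mul_pos hinit (hp (Fin.last k))
      _ ≤ _ := single_le_sum (fun l _ => mul_nonneg (pow_apply_nonneg hR k _ l) (hR l _))
          (mem_univ _)

section Substochastic

variable (hR : ∀ i j, 0 ≤ R i j) (hrow : ∀ i, ∑ j, R i j ≤ 1)
include hR hrow

theorem sum_pow_succ_apply_le (m : ℕ) (i : ι) : ∑ j, (R ^ (m + 1)) i j ≤ ∑ j, (R ^ m) i j := by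
  rw [pow_succ, sum_mul_apply]
  exact sum_le_sum fun l _ => mul_le_of_le_one_right (pow_apply_nonneg hR m i l) (hrow l)

theorem antitone_sum_pow_apply (i : ι) : Antitone fun m => ∑ j, (R ^ m) i j :=
  antitone_nat_of_succ_le fun m => sum_pow_succ_apply_le hR hrow m i

theorem sum_pow_apply_le_one (m : ℕ) (i : ι) : ∑ j, (R ^ m) i j ≤ 1 := by
  simpa [one_apply] using antitone_sum_pow_apply hR hrow i (Nat.zero_le m)

theorem sum_pow_succ_apply_lt_one_of_path {k : ℕ} (p : Fin (k + 1) → ι)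
    (hp : ∀ j : Fin k, 0 < R (p j.castSucc) (p j.succ)) (hleak : ∑ j, R (p (Fin.last k)) j < 1) :
    ∑ j, (R ^ (k + 1)) (p 0) j < 1 := by
  rw [pow_succ, sum_mul_apply]
  calc ∑ l, (R ^ k) (p 0) l * ∑ j, R l j < ∑ l, (R ^ k) (p 0) l :=
        sum_lt_sum (fun l _ => mul_le_of_le_one_right (pow_apply_nonneg hR k _ l) (hrow l))
          ⟨_, mem_univ _, mul_lt_of_lt_one_right (pow_apply_pos_of_path hR p hp) hleak⟩
    _ ≤ 1 := sum_pow_apply_le_one hR hrow k _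

theorem exists_pow_sum_apply_lt_one
    (hpath : ∀ i, ∃ k : ℕ, ∃ p : Fin (k + 1) → ι, p 0 = i ∧
      (∀ j : Fin k, 0 < R (p j.castSucc) (p j.succ)) ∧ ∑ j, R (p (Fin.last k)) j < 1) :
    ∃ m, m ≠ 0 ∧ ∀ i, ∑ j, (R ^ m) i j < 1 := by
  choose k p hp0 hp hleak using hpath
  refine ⟨univ.sup k + 1, by omega, fun i => ?_⟩
  calc ∑ j, (R ^ (univ.sup k + 1)) i j ≤ ∑ j, (R ^ (k i + 1)) i j :=
        antitone_sum_pow_apply hR hrow i (by gcongr; exact le_sup (mem_univ i))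
    _ < 1 := by
      simpa only [hp0] using sum_pow_succ_apply_lt_one_of_path hR hrow (p i) (hp i) (hleak i)

end Substochastic

end OrderedSemiring

omit [DecidableEq ι] in
theorem linfty_opNNNorm_map_ofReal_lt_one {B : Matrix ι ι ℝ} (hB : ∀ i j, 0 ≤ B i j)
    (hrow : ∀ i, ∑ j, B i j < 1) : ‖B.map Complex.ofReal‖₊ < 1 := by
  rw [linfty_opNNNorm_def, Finset.sup_lt_iff zero_lt_one]
  intro i _
  rw [← NNReal.coe_lt_coe]
  push_cast
  simpa [Complex.norm_real, abs_of_nonneg (hB i _)] using hrow i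

theorem linfty_opNNNorm_one_le : ‖(1 : Matrix ι ι ℂ)‖₊ ≤ 1 := by
  rw [linfty_opNNNorm_def]
  exact Finset.sup_le fun i _ => by simp [one_apply, apply_ite]

end Matrix

open Matrix in
/-- Substochastic matrices with leaks reachable from everywhere
have spectral radius strictly less than 1 (so `I - R` is invertible).
`R` is nonnegative with row sums at most 1, and from every index there is a
finite sequence of positive transitions ending at an index whose row sum is
strictly less than 1. -/
theorem substochastic_spectral_radius_lt_one (n : ℕ)
    (R : Matrix (Fin n) (Fin n) ℝ)
    (hR : ∀ i j, 0 ≤ R i j) (hrow : ∀ i, ∑ j, R i j ≤ 1)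
    (hpath : ∀ i : Fin n, ∃ k : ℕ, ∃ p : Fin (k + 1) → Fin n,
      p 0 = i ∧ (∀ j : Fin k, 0 < R (p j.castSucc) (p j.succ)) ∧
        ∑ j, R (p (Fin.last k)) j < 1) :
    spectralRadius ℂ (R.map (Complex.ofReal)) < 1 ∧ IsUnit (1 - R) := by
  obtain ⟨m, hm, hrowm⟩ := exists_pow_sum_apply_lt_one hR hrow hpath
  have hnorm : ‖R.map Complex.ofReal ^ m‖₊ < 1 :=
    map_pow Complex.ofRealHom.mapMatrix R m ▸
      linfty_opNNNorm_map_ofReal_lt_one (pow_apply_nonneg hR m) hrowm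
  have hρ : spectralRadius ℂ (R.map Complex.ofReal) < 1 :=
    spectralRadius_lt_one_of_nnnorm_pow_lt_one linfty_opNNNorm_one_le hm hnorm
  refine ⟨hρ, isUnit_of_isUnit_map Complex.ofRealHom ?_⟩
  rw [← RingHom.mapMatrix_apply, map_sub, map_one]
  exact isUnit_one_sub_of_spectralRadius_lt_one hρ
end

section
/- Monotonicity of influence spread: Let G be a finite directed graph defining an absorbing-chain structure with a bias node. For seed sets T ⊆ S (not containing the bias node), the equilibrium node values satisfy v^T(i) ≤ v^S(i) for every node i, and consequently σ(T) ≤ σ(S). -/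
/-- `v` is the equilibrium (harmonic extension) for the Heat Conduction model
with transition matrix `P`, seed set `S` (boundary value 1) and bias node
`bias` (boundary value 0): it is fixed on the boundary and harmonic elsewhere. -/
def IsHCEquilibrium {n : ℕ} (P : Matrix (Fin n) (Fin n) ℝ) (bias : Fin n)
    (S : Finset (Fin n)) (v : Fin n → ℝ) : Prop :=
  v bias = 0 ∧ (∀ s ∈ S, v s = 1) ∧
    ∀ i, i ≠ bias → i ∉ S → v i = ∑ j, P i j * v j

/-- From every non-bias node there is a path of positive transitions of `P`
reaching the bias node (absorbing-chain structure). -/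
def ReachesBias {n : ℕ} (P : Matrix (Fin n) (Fin n) ℝ) (bias : Fin n) : Prop :=
  ∀ i : Fin n, i ≠ bias → ∃ k : ℕ, ∃ p : Fin (k + 1) → Fin n,
    p 0 = i ∧ (∀ j : Fin k, 0 < P (p j.castSucc) (p j.succ)) ∧
      p (Fin.last k) = bias

/-- Maximum principle for discrete harmonic functions with absorbing bias. -/
lemma hc_max_principle {n : ℕ} (P : Matrix (Fin n) (Fin n) ℝ)
    (hP0 : ∀ i j, 0 ≤ P i j) (hP1 : ∀ i, ∑ j, P i j = 1)
    (bias : Fin n) (hreach : ReachesBias P bias)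
    (B : Finset (Fin n)) (hbB : bias ∈ B) (c : ℝ)
    (w : Fin n → ℝ) (hbd : ∀ b ∈ B, w b ≤ c)
    (hharm : ∀ i ∉ B, w i = ∑ j, P i j * w j) :
    ∀ i, w i ≤ c := by
  intro i
  by_contra hcon
  push_neg at hcon
  obtain ⟨i0, -, hmax⟩ := Finset.exists_max_image Finset.univ w ⟨i, Finset.mem_univ i⟩
  set M := w i0 with hMdef
  have hmax' : ∀ j, w j ≤ M := fun j => hmax j (Finset.mem_univ j)
  have hM : c < M := lt_of_lt_of_le hcon (hmax' i)
  have key : ∀ x, w x = M → ∀ j, 0 < P x j → w j = M := by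
    intro x hx j hj
    have hxB : x ∉ B := by
      intro hmem
      exact absurd (hbd x hmem) (by rw [hx]; exact not_le.mpr hM)
    have hh := hharm x hxB
    have hsum : ∑ k, P x k * (M - w k) = 0 := by
      have : ∑ k, P x k * (M - w k) = (∑ k, P x k) * M - ∑ k, P x k * w k := by
        rw [Finset.sum_mul]
        rw [← Finset.sum_sub_distrib]
        congr 1
        ext k
        ring
      rw [this, hP1, ← hh, hx]
      ring
    have hterm : P x j * (M - w j) = 0 := by
      have hnn : ∀ k ∈ Finset.univ, 0 ≤ P x k * (M - w k) := by
        intro k _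
        exact mul_nonneg (hP0 x k) (sub_nonneg.mpr (hmax' k))
      exact (Finset.sum_eq_zero_iff_of_nonneg hnn).mp hsum j (Finset.mem_univ j)
    have : M - w j = 0 := by
      rcases mul_eq_zero.mp hterm with h | h
      · exact absurd h (ne_of_gt hj)
      · exact h
    linarith
  have hi0b : i0 ≠ bias := by
    intro h
    have := hbd bias hbB
    rw [← h] at this
    exact absurd this (not_le.mpr hM)
  obtain ⟨k, p, hp0, hpos, hpl⟩ := hreach i0 hi0b
  have hall : ∀ m : Fin (k + 1), w (p m) = M := by
    intro m
    induction m using Fin.induction with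
    | zero => rw [hp0]
    | succ j ih => exact key _ ih _ (hpos j)
  have hlast := hall (Fin.last k)
  rw [hpl] at hlast
  have := hbd bias hbB
  rw [hlast] at this
  exact absurd this (not_le.mpr hM)

/-- Monotonicity of influence spread. For seed sets `T ⊆ S` not
containing the bias node, the equilibrium node values satisfy
`v^T i ≤ v^S i` for every node `i`, hence `σ(T) ≤ σ(S)`. -/
theorem hc_monotonicity (n : ℕ) (P : Matrix (Fin n) (Fin n) ℝ)
    (hP0 : ∀ i j, 0 ≤ P i j) (hP1 : ∀ i, ∑ j, P i j = 1)
    (bias : Fin n) (hreach : ReachesBias P bias)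
    (T S : Finset (Fin n)) (hTS : T ⊆ S) (hbS : bias ∉ S)
    (vT vS : Fin n → ℝ)
    (hvT : IsHCEquilibrium P bias T vT) (hvS : IsHCEquilibrium P bias S vS) :
    (∀ i, vT i ≤ vS i) ∧ (∑ i, vT i) ≤ (∑ i, vS i) := by
  obtain ⟨hTb, hT1, hTh⟩ := hvT
  obtain ⟨hSb, hS1, hSh⟩ := hvS
  -- Step 1: vT ≤ 1 everywhere
  have hvT1 : ∀ i, vT i ≤ 1 := by
    apply hc_max_principle P hP0 hP1 bias hreach (insert bias T)
      (Finset.mem_insert_self _ _)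
    · intro b hb
      rcases Finset.mem_insert.mp hb with h | h
      · rw [h, hTb]; norm_num
      · rw [hT1 b h]
    · intro i hi
      rw [Finset.mem_insert] at hi
      push_neg at hi
      exact hTh i hi.1 hi.2
  -- Step 2: vT - vS ≤ 0 everywhere
  have hle : ∀ i, vT i ≤ vS i := by
    have := hc_max_principle P hP0 hP1 bias hreach (insert bias S)
      (Finset.mem_insert_self _ _) 0 (fun i => vT i - vS i) ?_ ?_
    · intro i
      have := this i
      linarith
    · intro b hb
      show vT b - vS b ≤ 0
      rcases Finset.mem_insert.mp hb with h | h
      · rw [h, hTb, hSb]; norm_num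
      · rw [hS1 b h]
        have := hvT1 b
        linarith
    · intro i hi
      rw [Finset.mem_insert] at hi
      push_neg at hi
      have h1 := hTh i hi.1 (fun hmem => hi.2 (hTS hmem))
      have h2 := hSh i hi.1 hi.2
      show vT i - vS i = ∑ j, P i j * (vT j - vS j)
      rw [h1, h2, ← Finset.sum_sub_distrib]
      congr 1
      ext j
      ring
  exact ⟨hle, Finset.sum_le_sum fun i _ => hle i⟩
end

section
/- Submodularity of node values: Let T ⊆ S be seed sets not containing node s or the bias node. Then for every node i, v^{T∪{s}}(i) - v^{T}(i) ≥ v^{S∪{s}}(i) - v^{S}(i), where v^A denotes the equilibrium values of the Heat Conduction model with seed set A (boundary value 1 on seeds, 0 on bias node). -/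
/-- Discrete minimum principle. -/
lemma hc_min_principle {n : ℕ} (P : Matrix (Fin n) (Fin n) ℝ)
    (hP0 : ∀ i j, 0 ≤ P i j) (hP1 : ∀ i, ∑ j, P i j = 1)
    (bias : Fin n) (hreach : ReachesBias P bias)
    (B : Finset (Fin n)) (hbB : bias ∈ B)
    (u : Fin n → ℝ) (hB : ∀ j ∈ B, 0 ≤ u j)
    (hharm : ∀ i, i ∉ B → u i = ∑ j, P i j * u j) :
    ∀ i, 0 ≤ u i := by
  by_contra h
  push_neg at h
  obtain ⟨i0, hi0⟩ := h
  obtain ⟨i, -, hi⟩ := Finset.exists_min_image Finset.univ u ⟨i0, Finset.mem_univ i0⟩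
  set m := u i with hm
  have hmneg : m < 0 := lt_of_le_of_lt (hi i0 (Finset.mem_univ _)) hi0
  have hmin : ∀ j, m ≤ u j := fun j => hi j (Finset.mem_univ j)
  have step : ∀ j, u j = m → j ∉ B ∧ ∀ k, 0 < P j k → u k = m := by
    intro j hj
    have hjB : j ∉ B := by
      intro hjB
      have := hB j hjB
      rw [hj] at this; linarith
    refine ⟨hjB, ?_⟩
    have hh := hharm j hjB
    have hsum : ∑ k, P j k * (u k - m) = 0 := by
      have : ∑ k, P j k * (u k - m) = (∑ k, P j k * u k) - (∑ k, P j k) * m := by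
        rw [Finset.sum_mul, ← Finset.sum_sub_distrib]
        apply Finset.sum_congr rfl
        intro k _; ring
      rw [this, ← hh, hP1, hj]; ring
    intro k hk
    have hnn : ∀ k ∈ Finset.univ, 0 ≤ P j k * (u k - m) := fun k _ =>
      mul_nonneg (hP0 j k) (by linarith [hmin k])
    have hz := (Finset.sum_eq_zero_iff_of_nonneg hnn).mp hsum k (Finset.mem_univ k)
    rcases mul_eq_zero.mp hz with h' | h'
    · exact absurd h' (ne_of_gt hk)
    · linarith
  have hib : i ≠ bias := by
    intro h
    have := hB bias hbB
    rw [← h] at this; linarith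
  obtain ⟨k, p, hp0, hpos, hplast⟩ := hreach i hib
  have hall : ∀ t : Fin (k+1), u (p t) = m := by
    intro t
    induction t using Fin.induction with
    | zero => rw [hp0]
    | succ t ih => exact (step _ ih).2 _ (hpos t)
  have hlast := (step _ (hall (Fin.last k))).1
  rw [hplast] at hlast
  exact hlast hbB

lemma hc_le_one {n : ℕ} (P : Matrix (Fin n) (Fin n) ℝ)
    (hP0 : ∀ i j, 0 ≤ P i j) (hP1 : ∀ i, ∑ j, P i j = 1)
    (bias : Fin n) (hreach : ReachesBias P bias)
    (A : Finset (Fin n)) (v : Fin n → ℝ)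
    (hv : IsHCEquilibrium P bias A v) : ∀ i, v i ≤ 1 := by
  obtain ⟨hb, hA, hh⟩ := hv
  have := hc_min_principle P hP0 hP1 bias hreach (insert bias A)
    (Finset.mem_insert_self _ _) (fun j => 1 - v j)
    (by
      intro j hj
      rcases Finset.mem_insert.mp hj with h | h
      · rw [h, hb]; norm_num
      · rw [hA j h]; norm_num)
    (by
      intro i hiB
      rw [Finset.mem_insert, not_or] at hiB
      have := hh i hiB.1 hiB.2
      have hcalc : ∑ j, P i j * (1 - v j) = (∑ j, P i j) - ∑ j, P i j * v j := by
        rw [← Finset.sum_sub_distrib]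
        apply Finset.sum_congr rfl
        intro k _; ring
      rw [hcalc, hP1, ← this])
  intro i
  have h := this i
  linarith

/-- Monotonicity in the seed set. -/
lemma hc_mono {n : ℕ} (P : Matrix (Fin n) (Fin n) ℝ)
    (hP0 : ∀ i j, 0 ≤ P i j) (hP1 : ∀ i, ∑ j, P i j = 1)
    (bias : Fin n) (hreach : ReachesBias P bias)
    (A B : Finset (Fin n)) (hAB : A ⊆ B)
    (vA vB : Fin n → ℝ)
    (hvA : IsHCEquilibrium P bias A vA)
    (hvB : IsHCEquilibrium P bias B vB) : ∀ i, vA i ≤ vB i := by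
  have hle1 := hc_le_one P hP0 hP1 bias hreach A vA hvA
  obtain ⟨hbA, hA, hhA⟩ := hvA
  obtain ⟨hbB, hBs, hhB⟩ := hvB
  have := hc_min_principle P hP0 hP1 bias hreach (insert bias B)
    (Finset.mem_insert_self _ _) (fun j => vB j - vA j)
    (by
      intro j hj
      rcases Finset.mem_insert.mp hj with h | h
      · rw [h, hbA, hbB]; norm_num
      · rw [hBs j h]; linarith [hle1 j])
    (by
      intro i hiB
      rw [Finset.mem_insert, not_or] at hiB
      have h1 := hhA i hiB.1 (fun hi => hiB.2 (hAB hi))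
      have h2 := hhB i hiB.1 hiB.2
      have hcalc : ∑ j, P i j * (vB j - vA j)
          = (∑ j, P i j * vB j) - ∑ j, P i j * vA j := by
        rw [← Finset.sum_sub_distrib]
        apply Finset.sum_congr rfl
        intro k _; ring
      rw [hcalc, ← h1, ← h2])
  intro i
  have h := this i
  linarith

/-- Submodularity of node values. For seed sets `T ⊆ S` not
containing `s` or the bias node, every node `i` satisfies
`v^{T∪{s}} i - v^T i ≥ v^{S∪{s}} i - v^S i`. -/
theorem hc_node_value_submodular (n : ℕ) (P : Matrix (Fin n) (Fin n) ℝ)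
    (hP0 : ∀ i j, 0 ≤ P i j) (hP1 : ∀ i, ∑ j, P i j = 1)
    (bias : Fin n) (hreach : ReachesBias P bias)
    (T S : Finset (Fin n)) (hTS : T ⊆ S) (hbS : bias ∉ S)
    (s : Fin n) (hsS : s ∉ S) (hsb : s ≠ bias)
    (vT vTs vS vSs : Fin n → ℝ)
    (hvT : IsHCEquilibrium P bias T vT)
    (hvTs : IsHCEquilibrium P bias (insert s T) vTs)
    (hvS : IsHCEquilibrium P bias S vS)
    (hvSs : IsHCEquilibrium P bias (insert s S) vSs) :
    ∀ i, vTs i - vT i ≥ vSs i - vS i := by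
  have hmonoTS := hc_mono P hP0 hP1 bias hreach T S hTS vT vS hvT hvS
  have hmonoTTs := hc_mono P hP0 hP1 bias hreach T (insert s T)
    (Finset.subset_insert s T) vT vTs hvT hvTs
  obtain ⟨hbT, hT, hhT⟩ := hvT
  obtain ⟨hbTs, hTs, hhTs⟩ := hvTs
  obtain ⟨hbSv, hS, hhS⟩ := hvS
  obtain ⟨hbSs, hSs, hhSs⟩ := hvSs
  have key := hc_min_principle P hP0 hP1 bias hreach (insert bias (insert s S))
    (Finset.mem_insert_self _ _) (fun j => vTs j - vT j - (vSs j - vS j))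
    (by
      intro j hj
      rcases Finset.mem_insert.mp hj with h | h
      · rw [h, hbT, hbTs, hbSv, hbSs]; norm_num
      · rcases Finset.mem_insert.mp h with h' | h'
        · rw [h', hTs s (Finset.mem_insert_self s T),
            hSs s (Finset.mem_insert_self s S)]
          linarith [hmonoTS s]
        · by_cases hjT : j ∈ T
          · rw [hT j hjT, hTs j (Finset.mem_insert_of_mem hjT),
              hS j h', hSs j (Finset.mem_insert_of_mem h')]
            norm_num
          · rw [hS j h', hSs j (Finset.mem_insert_of_mem h')]
            linarith [hmonoTTs j])
    (by
      intro i hiB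
      rw [Finset.mem_insert, not_or, Finset.mem_insert, not_or] at hiB
      obtain ⟨hib, his, hiS⟩ := hiB
      have hiT : i ∉ T := fun h => hiS (hTS h)
      have h1 := hhT i hib hiT
      have h2 := hhTs i hib (by simp [Finset.mem_insert, his, hiT])
      have h3 := hhS i hib hiS
      have h4 := hhSs i hib (by simp [Finset.mem_insert, his, hiS])
      have hcalc : ∑ j, P i j * (vTs j - vT j - (vSs j - vS j))
          = (∑ j, P i j * vTs j) - (∑ j, P i j * vT j)
            - ((∑ j, P i j * vSs j) - ∑ j, P i j * vS j) := by
        rw [← Finset.sum_sub_distrib, ← Finset.sum_sub_distrib, ← Finset.sum_sub_distrib]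
        apply Finset.sum_congr rfl
        intro k _; ring
      rw [hcalc, ← h1, ← h2, ← h3, ← h4])
  intro i
  have h := key i
  linarith
end

section
/- Marginal gain formula: Let S be a seed set with equilibrium values v^S and fundamental matrix F^S over interior nodes. For a new candidate seed s (interior, not the bias node), the marginal gain in influence spread equals σ(S∪{s},∞) - σ(S,∞) = ∑_{i interior, i≠s} (F^S_{is}/F^S_{ss})·(1 - v^S(s)) + (1 - v^S(s)). -/
lemma harmonic_zero' {n : ℕ} {P : Matrix (Fin n) (Fin n) ℝ}
    (hP0 : ∀ i j, 0 ≤ P i j) (hP1 : ∀ i, ∑ j, P i j = 1)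
    {bias : Fin n} (hreach : ReachesBias P bias)
    (U : Set (Fin n)) (hbU : bias ∉ U)
    (x : Fin n → ℝ) (hx0 : ∀ i, i ∉ U → x i = 0)
    (hxh : ∀ i ∈ U, x i = ∑ j, P i j * x j) :
    ∀ i, x i = 0 := by
  by_contra h
  push_neg at h
  obtain ⟨i₀, hi₀⟩ := h
  obtain ⟨m, -, hm⟩ := Finset.exists_max_image Finset.univ (fun i => |x i|)
    ⟨i₀, Finset.mem_univ _⟩
  set M := |x m| with hMdef
  have hMpos : 0 < M := lt_of_lt_of_le (abs_pos.mpr hi₀) (hm i₀ (Finset.mem_univ _))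
  have memU : ∀ i, |x i| = M → i ∈ U := by
    intro i hi
    by_contra hiU
    rw [hx0 i hiU] at hi
    simp at hi
    exact absurd hi.symm (ne_of_gt hMpos)
  have key : ∀ i, |x i| = M → ∀ j, 0 < P i j → |x j| = M := by
    intro i hi j hj
    have hiU : i ∈ U := memU i hi
    have h1 : M ≤ ∑ k, P i k * |x k| := by
      calc M = |x i| := hi.symm
        _ = |∑ k, P i k * x k| := by rw [hxh i hiU]
        _ ≤ ∑ k, |P i k * x k| := Finset.abs_sum_le_sum_abs _ _
        _ = ∑ k, P i k * |x k| := by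
            refine Finset.sum_congr rfl fun k _ => ?_
            rw [abs_mul, abs_of_nonneg (hP0 i k)]
    have heq : ∑ k, P i k * (M - |x k|) = 0 := by
      have hsp : ∑ k, P i k * (M - |x k|) = ∑ k, P i k * M - ∑ k, P i k * |x k| := by
        rw [← Finset.sum_sub_distrib]
        exact Finset.sum_congr rfl fun k _ => by ring
      have hsm : ∑ k, P i k * M = M := by rw [← Finset.sum_mul, hP1 i, one_mul]
      have h2 : ∑ k, P i k * (M - |x k|) ≤ 0 := by rw [hsp, hsm]; linarith
      have h3 : 0 ≤ ∑ k, P i k * (M - |x k|) :=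
        Finset.sum_nonneg fun k _ => mul_nonneg (hP0 i k)
          (by linarith [hm k (Finset.mem_univ k)])
      linarith
    have hterm := (Finset.sum_eq_zero_iff_of_nonneg
      (fun k _ => mul_nonneg (hP0 i k)
        (by linarith [hm k (Finset.mem_univ k)] : (0:ℝ) ≤ M - |x k|))).mp heq j
      (Finset.mem_univ j)
    rcases mul_eq_zero.mp hterm with h | h
    · exact absurd h (ne_of_gt hj)
    · linarith
  have hmb : m ≠ bias := fun h => hbU (h ▸ memU m rfl)
  obtain ⟨k, p, hp0, hpt, hpl⟩ := hreach m hmb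
  have hall : ∀ t : ℕ, ∀ ht : t < k + 1, |x (p ⟨t, ht⟩)| = M := by
    intro t
    induction t with
    | zero =>
        intro ht
        have : (⟨0, ht⟩ : Fin (k+1)) = 0 := rfl
        rw [this, hp0]
    | succ t ih =>
        intro ht
        have htk : t < k := Nat.lt_of_succ_lt_succ ht
        have h1 := ih (Nat.lt_of_lt_of_le htk (Nat.le_succ k))
        exact key _ h1 _ (hpt ⟨t, htk⟩)
  have hlast := hall k (Nat.lt_succ_self k)
  have hlb : p ⟨k, Nat.lt_succ_self k⟩ = bias := hpl
  rw [hlb, hx0 bias hbU] at hlast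
  simp at hlast
  exact absurd hlast.symm (ne_of_gt hMpos)

/-- Marginal gain formula. With `v^S` the equilibrium values for
seed set `S`, `F^S = (I - R^S)⁻¹` the fundamental matrix over interior nodes
(those outside `{bias} ∪ S`), and a new interior candidate seed `s`, the
marginal gain of `s` is
`σ(S∪{s},∞) - σ(S,∞) = ∑_{i interior, i ≠ s} (F^S_{is}/F^S_{ss})·(1 - v^S s) + (1 - v^S s)`. -/
theorem hc_marginal_gain_formula (n : ℕ) (P : Matrix (Fin n) (Fin n) ℝ)
    (hP0 : ∀ i j, 0 ≤ P i j) (hP1 : ∀ i, ∑ j, P i j = 1)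
    (bias : Fin n) (hreach : ReachesBias P bias)
    (S : Finset (Fin n)) (hbS : bias ∉ S)
    (s : Fin n) (hsS : s ∉ S) (hsb : s ≠ bias)
    (hsmem : s ∉ insert bias S)
    (RS : Matrix {i : Fin n // i ∉ insert bias S}
      {i : Fin n // i ∉ insert bias S} ℝ)
    (hRS : RS = Matrix.of fun i j => P i.val j.val)
    (F : Matrix {i : Fin n // i ∉ insert bias S}
      {i : Fin n // i ∉ insert bias S} ℝ)
    (hF : F = (1 - RS)⁻¹)
    (vS vSs : Fin n → ℝ)
    (hvS : IsHCEquilibrium P bias S vS)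
    (hvSs : IsHCEquilibrium P bias (insert s S) vSs) :
    (∑ i, vSs i) - (∑ i, vS i) =
      (∑ i ∈ Finset.univ \ {(⟨s, hsmem⟩ : {i : Fin n // i ∉ insert bias S})},
        F i ⟨s, hsmem⟩ / F ⟨s, hsmem⟩ ⟨s, hsmem⟩ * (1 - vS s)) +
        (1 - vS s) := by
  classical
  obtain ⟨hvSb, hvS1, hvSh⟩ := hvS
  obtain ⟨hvSsb, hvSs1, hvSsh⟩ := hvSs
  set sι : {i : Fin n // i ∉ insert bias S} := ⟨s, hsmem⟩ with hsι
  -- sum over subtype equals full sum when g vanishes on the complement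
  have sum_T : ∀ g : Fin n → ℝ, (∀ i, i ∈ insert bias S → g i = 0) →
      ∑ i : {i : Fin n // i ∉ insert bias S}, g i.val = ∑ i, g i := by
    intro g hg
    rw [← Finset.sum_subtype (Finset.univ.filter (fun i => i ∉ insert bias S))
      (by simp) g]
    exact Finset.sum_filter_of_ne (fun i _ hne hmem => hne (hg i hmem))
  -- invertibility of 1 - RS
  have hdet : IsUnit (1 - RS).det := by
    rw [isUnit_iff_ne_zero]
    intro hd0
    obtain ⟨z, hz0, hz⟩ := Matrix.exists_mulVec_eq_zero_iff.mpr hd0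
    set x : Fin n → ℝ := fun i => if h : i ∉ insert bias S then z ⟨i, h⟩ else 0 with hx
    have hx0 : ∀ i, i ∉ {i : Fin n | i ∉ insert bias S} → x i = 0 := by
      intro i hi
      simp only [Set.mem_setOf_eq, not_not] at hi
      show (if h : i ∉ insert bias S then z ⟨i, h⟩ else 0) = 0
      rw [dif_neg (not_not_intro hi)]
    have hxT : ∀ j : {i : Fin n // i ∉ insert bias S}, x j.val = z j := by
      intro j
      show (if h : (j : Fin n) ∉ insert bias S then z ⟨(j : Fin n), h⟩ else 0) = z j
      rw [dif_pos j.property]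
    have hxh : ∀ i ∈ {i : Fin n | i ∉ insert bias S}, x i = ∑ j, P i j * x j := by
      intro i hi
      simp only [Set.mem_setOf_eq] at hi
      have hrow := congrFun hz ⟨i, hi⟩
      simp only [Matrix.mulVec, dotProduct, Matrix.sub_apply, Matrix.one_apply,
        Pi.zero_apply, sub_mul, Finset.sum_sub_distrib, ite_mul, one_mul, zero_mul,
        Finset.sum_ite_eq, Finset.mem_univ, if_true] at hrow
      have hsum : ∑ j : {i : Fin n // i ∉ insert bias S}, P i j.val * x j.val
          = ∑ j, P i j * x j := by
        refine sum_T (fun j => P i j * x j) fun j hj => ?_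
        have : x j = 0 := by
          show (if h : j ∉ insert bias S then z ⟨j, h⟩ else 0) = 0
          rw [dif_neg (not_not_intro hj)]
        show P i j * x j = 0
        rw [this, mul_zero]
      rw [← hsum]
      have : ∑ j : {i : Fin n // i ∉ insert bias S}, P i j.val * x j.val
          = ∑ j : {i : Fin n // i ∉ insert bias S}, RS ⟨i, hi⟩ j * z j := by
        refine Finset.sum_congr rfl fun j _ => ?_
        rw [hxT j, hRS]
        rfl
      rw [this, hxT ⟨i, hi⟩]
      linarith [hrow]
    have hzero := harmonic_zero' hP0 hP1 hreach _ (by simp) x hx0 hxh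
    apply hz0
    funext t
    have := hzero t.val
    rw [hxT t] at this
    exact this
  have hFmul : (1 - RS) * F = 1 := by
    rw [hF]; exact Matrix.mul_nonsing_inv _ hdet
  -- the row identity for F's s-column
  have hFrow : ∀ t : {i : Fin n // i ∉ insert bias S},
      F t sι - ∑ j : {i : Fin n // i ∉ insert bias S}, P t.val j.val * F j sι
        = if t = sι then 1 else 0 := by
    intro t
    have h1 := congrFun (congrFun hFmul t) sι
    simp only [Matrix.mul_apply, Matrix.sub_apply, Matrix.one_apply, sub_mul,
      Finset.sum_sub_distrib, ite_mul, one_mul, zero_mul, Finset.sum_ite_eq,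
      Finset.mem_univ, if_true] at h1
    rw [← h1]
    congr 1
    refine Finset.sum_congr rfl fun j _ => ?_
    rw [hRS]
    rfl
  -- extension of F's s-column
  set ybar : Fin n → ℝ := fun i =>
    if h : i ∉ insert bias S then F ⟨i, h⟩ sι else 0 with hybar
  have hybarT : ∀ j : {i : Fin n // i ∉ insert bias S}, ybar j.val = F j sι := by
    intro j
    show (if h : (j : Fin n) ∉ insert bias S then F ⟨(j : Fin n), h⟩ sι else 0) = F j sι
    rw [dif_pos j.property]
  have hybar0 : ∀ i ∈ insert bias S, ybar i = 0 := by
    intro i hi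
    show (if h : i ∉ insert bias S then F ⟨i, h⟩ sι else 0) = 0
    rw [dif_neg (not_not_intro hi)]
  -- ybar is harmonic at interior nodes ≠ s
  have hybar_h : ∀ i, i ∉ insert bias S → i ≠ s → ybar i = ∑ j, P i j * ybar j := by
    intro i hi hne
    have h1 := hFrow ⟨i, hi⟩
    rw [if_neg (by simp [hsι, Subtype.ext_iff, hne])] at h1
    have hsum : ∑ j : {i : Fin n // i ∉ insert bias S}, P i j.val * ybar j.val
        = ∑ j, P i j * ybar j :=
      sum_T (fun j => P i j * ybar j) fun j hj => by
        show P i j * ybar j = 0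
        rw [hybar0 j hj, mul_zero]
    have h2 : ∑ j : {i : Fin n // i ∉ insert bias S}, P i j.val * ybar j.val
        = ∑ j : {i : Fin n // i ∉ insert bias S}, P i j.val * F j sι := by
      refine Finset.sum_congr rfl fun j _ => by rw [hybarT j]
    have h3 : ybar i = F ⟨i, hi⟩ sι := hybarT ⟨i, hi⟩
    rw [← hsum, h2, h3]
    linarith [h1]
  -- F s s ≠ 0
  have hFss : F sι sι ≠ 0 := by
    intro h0
    have hy0 : ∀ i, i ∉ {i : Fin n | i ∉ insert bias S ∧ i ≠ s} → ybar i = 0 := by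
      intro i hi
      simp only [Set.mem_setOf_eq, not_and_or, not_not] at hi
      rcases hi with hi | hi
      · exact hybar0 i hi
      · rw [hi, show ybar s = F sι sι from hybarT sι, h0]
    have hyh : ∀ i ∈ {i : Fin n | i ∉ insert bias S ∧ i ≠ s},
        ybar i = ∑ j, P i j * ybar j := fun i hi => hybar_h i hi.1 hi.2
    have hzero := harmonic_zero' hP0 hP1 hreach _ (by simp) ybar hy0 hyh
    have hrow := hFrow sι
    rw [if_pos rfl] at hrow
    have hc1 : F sι sι = 0 := h0
    have hc2 : ∑ j : {i : Fin n // i ∉ insert bias S}, P s j.val * F j sι = 0 := by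
      apply Finset.sum_eq_zero
      intro j _
      have := hzero j.val
      rw [hybarT j] at this
      rw [this, mul_zero]
    rw [hc1, hc2] at hrow
    norm_num at hrow
  -- the difference function
  set w : Fin n → ℝ := fun i => vSs i - vS i with hw
  have hws : w s = 1 - vS s := by
    have : vSs s = 1 := hvSs1 s (Finset.mem_insert_self s S)
    simp [hw, this]
  have hw0 : ∀ i ∈ insert bias S, w i = 0 := by
    intro i hi
    rcases Finset.mem_insert.mp hi with h | h
    · subst h; simp [hw, hvSb, hvSsb]
    · have h1 : vS i = 1 := hvS1 i h
      have h2 : vSs i = 1 := hvSs1 i (Finset.mem_insert_of_mem h)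
      simp [hw, h1, h2]
  have hwh : ∀ i, i ∉ insert bias S → i ≠ s → w i = ∑ j, P i j * w j := by
    intro i hi hne
    have hib : i ≠ bias := fun h => hi (h ▸ Finset.mem_insert_self bias S)
    have hiS : i ∉ S := fun h => hi (Finset.mem_insert_of_mem h)
    have hisS : i ∉ insert s S := by
      simp only [Finset.mem_insert, not_or]
      exact ⟨hne, hiS⟩
    have e1 := hvSsh i hib hisS
    have e2 := hvSh i hib hiS
    have : w i = ∑ j, (P i j * vSs j - P i j * vS j) := by
      rw [Finset.sum_sub_distrib, ← e1, ← e2]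
    rw [this]
    exact Finset.sum_congr rfl fun j _ => by simp [hw]; ring
  -- the combined function is zero
  set c : ℝ := (1 - vS s) / F sι sι with hc
  have hzf0 : ∀ i, i ∉ {i : Fin n | i ∉ insert bias S ∧ i ≠ s} →
      w i - ybar i * c = 0 := by
    intro i hi
    simp only [Set.mem_setOf_eq, not_and_or, not_not] at hi
    rcases hi with hi | hi
    · rw [hw0 i hi, hybar0 i hi]; ring
    · rw [hi, hws, show ybar s = F sι sι from hybarT sι, hc, mul_comm,
        div_mul_cancel₀ _ hFss]
      ring
  have hzfh : ∀ i ∈ {i : Fin n | i ∉ insert bias S ∧ i ≠ s},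
      w i - ybar i * c = ∑ j, P i j * (w j - ybar j * c) := by
    intro i hi
    have h1 := hwh i hi.1 hi.2
    have h2 := hybar_h i hi.1 hi.2
    have : ∑ j, P i j * (w j - ybar j * c)
        = ∑ j, P i j * w j - (∑ j, P i j * ybar j) * c := by
      rw [Finset.sum_mul, ← Finset.sum_sub_distrib]
      exact Finset.sum_congr rfl fun j _ => by ring
    rw [this, ← h1, ← h2]
  have hzero := harmonic_zero' hP0 hP1 hreach _ (by simp)
    (fun i => w i - ybar i * c) hzf0 hzfh
  have hwy : ∀ i, w i = ybar i * c := by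
    intro i
    have h : w i - ybar i * c = 0 := hzero i
    linarith
  -- final computation
  have hLHS : (∑ i, vSs i) - (∑ i, vS i) = ∑ i, w i := by
    rw [← Finset.sum_sub_distrib]
  have hsplit : ∑ i, w i
      = ∑ i : {i : Fin n // i ∉ insert bias S}, w i.val := (sum_T w hw0).symm
  rw [hLHS, hsplit,
    Finset.sum_eq_sum_sdiff_singleton_add (Finset.mem_univ sι) (fun i => w i.val)]
  have hwsι : w sι.val = 1 - vS s := hws
  rw [hwsι]
  congr 1
  refine Finset.sum_congr rfl fun i hi => ?_
  have : w i.val = F i sι * c := by rw [hwy i.val, hybarT i]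
  rw [this, hc]
  ring
end

section
/- Value update rule: with the notation above, after adding seed s to seed set S, the new equilibrium values satisfy, for every interior node i ≠ s: v^{S∪{s}}(i) = v^S(i) + (1 - v^S(s))·F^S_{is}/F^S_{ss}. -/
/-! Every node reaches the bias, so a superharmonic function vanishing on an absorbing set
containing the bias is nonnegative: the set where a negative minimum is attained would be closed
under positive transitions and hence contain the bias. Consequently `1 - R` is invertible
(harmonic functions vanishing on the boundary vanish) and the equilibrium is unique. The column
`G = F e_s`, extended by zero, is harmonic off the boundary except for a unit source at `s`, so it
is nonnegative and `F_ss = G s ≥ 1`. Therefore `v^S + ((1 - v^S s) / F_ss) G` equals `1` on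
`S ∪ {s}`, `0` at the bias and is harmonic elsewhere: it is `v^{S ∪ {s}}`. -/

section MinimumPrinciple

variable {n : ℕ} {P : Matrix (Fin n) (Fin n) ℝ} {bias : Fin n}

theorem ReachesBias.bias_mem_of_forward_closed (hreach : ReachesBias P bias) {M : Set (Fin n)}
    (hM : ∀ i ∈ M, ∀ j, 0 < P i j → j ∈ M) {i : Fin n} (hi : i ∈ M) : bias ∈ M := by
  by_cases hib : i = bias
  · exact hib ▸ hi
  obtain ⟨k, p, hp0, hstep, hlast⟩ := hreach i hib
  have hpath : ∀ t, p t ∈ M :=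
    Fin.induction (hp0 ▸ hi) fun t ht => hM _ ht _ (hstep t)
  exact hlast ▸ hpath (Fin.last k)

theorem eq_of_forall_le_of_sum_mul_le {ι : Type*} [Fintype ι] {p w : ι → ℝ} {a : ℝ}
    (hp0 : ∀ j, 0 ≤ p j) (hp1 : ∑ j, p j = 1) (hmin : ∀ j, a ≤ w j)
    (hsup : ∑ j, p j * w j ≤ a) {j : ι} (hj : 0 < p j) : w j = a := by
  have hterm : ∀ k ∈ Finset.univ, 0 ≤ p k * (w k - a) :=
    fun k _ => mul_nonneg (hp0 k) (sub_nonneg.mpr (hmin k))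
  have hsum : ∑ k, p k * (w k - a) = 0 := by
    refine le_antisymm ?_ (Finset.sum_nonneg hterm)
    simp only [mul_sub, Finset.sum_sub_distrib, ← Finset.sum_mul, hp1, one_mul]
    linarith
  have := (Finset.sum_eq_zero_iff_of_nonneg hterm).mp hsum j (Finset.mem_univ j)
  rcases mul_eq_zero.mp this with h | h
  · exact absurd h hj.ne'
  · linarith

theorem nonneg_of_superharmonic (hP0 : ∀ i j, 0 ≤ P i j) (hP1 : ∀ i, ∑ j, P i j = 1)
    (hreach : ReachesBias P bias) {B : Finset (Fin n)} (hbB : bias ∈ B) {w : Fin n → ℝ}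
    (hwB : ∀ i ∈ B, w i = 0) (hw : ∀ i ∉ B, ∑ j, P i j * w j ≤ w i) (i : Fin n) :
    0 ≤ w i := by
  obtain ⟨a, -, ha⟩ := Finset.exists_min_image Finset.univ w ⟨i, Finset.mem_univ i⟩
  by_contra! hneg
  have hmin : ∀ j, w a ≤ w j := fun j => ha j (Finset.mem_univ j)
  have hwa : w a < 0 := (hmin i).trans_lt hneg
  have hclosed : ∀ i ∈ {j | w j = w a}, ∀ j, 0 < P i j → j ∈ {j | w j = w a} := by
    intro i (hi : w i = w a) j hj
    have hiB : i ∉ B := fun hiB => hwa.ne (hi ▸ hwB i hiB)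
    exact eq_of_forall_le_of_sum_mul_le (hP0 i) (hP1 i) hmin (hi ▸ hw i hiB) hj
  have hbias : w bias = w a := hreach.bias_mem_of_forward_closed hclosed rfl
  exact hwa.ne (hbias ▸ hwB bias hbB)

theorem eq_zero_of_harmonic (hP0 : ∀ i j, 0 ≤ P i j) (hP1 : ∀ i, ∑ j, P i j = 1)
    (hreach : ReachesBias P bias) {B : Finset (Fin n)} (hbB : bias ∈ B) {w : Fin n → ℝ}
    (hwB : ∀ i ∈ B, w i = 0) (hw : ∀ i ∉ B, w i = ∑ j, P i j * w j) (i : Fin n) :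
    w i = 0 := by
  have hnonneg := nonneg_of_superharmonic hP0 hP1 hreach hbB hwB (fun i hi => (hw i hi).ge) i
  have hnonpos := nonneg_of_superharmonic hP0 hP1 hreach hbB (w := -w)
    (fun i hi => by simp [hwB i hi])
    (fun i hi => by simp [Finset.sum_neg_distrib, hw i hi]) i
  simp only [Pi.neg_apply, neg_nonneg] at hnonpos
  exact le_antisymm hnonpos hnonneg

theorem IsHCEquilibrium.unique (hP0 : ∀ i j, 0 ≤ P i j) (hP1 : ∀ i, ∑ j, P i j = 1)
    (hreach : ReachesBias P bias) {S : Finset (Fin n)} {v w : Fin n → ℝ}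
    (hv : IsHCEquilibrium P bias S v) (hw : IsHCEquilibrium P bias S w) : v = w := by
  obtain ⟨hvb, hvS, hvh⟩ := hv
  obtain ⟨hwb, hwS, hwh⟩ := hw
  funext i
  refine sub_eq_zero.mp (eq_zero_of_harmonic hP0 hP1 hreach (Finset.mem_insert_self bias S)
    (w := v - w) (fun i hi => ?_) (fun i hi => ?_) i)
  · rcases Finset.mem_insert.mp hi with rfl | hi
    · simp [hvb, hwb]
    · simp [hvS i hi, hwS i hi]
  · rw [Finset.mem_insert, not_or] at hi
    simp only [Pi.sub_apply, mul_sub, Finset.sum_sub_distrib, ← hvh i hi.1 hi.2,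
      ← hwh i hi.1 hi.2]

end MinimumPrinciple

theorem Fintype.sum_mul_extend_val {ι R : Type*} [Fintype ι] [NonUnitalNonAssocSemiring R]
    {p : ι → Prop} [DecidablePred p] (f : ι → R) (x : Subtype p → R) :
    ∑ j, f j * Function.extend Subtype.val x 0 j = ∑ j : Subtype p, f j * x j := by
  rw [← Fintype.sum_subtype_add_sum_subtype p]
  have hout : ∀ j : {j // ¬p j}, Function.extend Subtype.val x 0 j.val = 0 := fun j =>
    Function.extend_apply' _ _ _ fun ⟨a, ha⟩ => j.2 (ha ▸ a.2)
  simp [hout]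

section GreenColumn

open Matrix

variable {n : ℕ} {P : Matrix (Fin n) (Fin n) ℝ} {bias : Fin n} {B : Finset (Fin n)}

abbrev interiorBlock (P : Matrix (Fin n) (Fin n) ℝ) (B : Finset (Fin n)) :
    Matrix {i // i ∉ B} {i // i ∉ B} ℝ :=
  P.submatrix Subtype.val Subtype.val

theorem extend_val_of_mem (x : {i // i ∉ B} → ℝ) {i : Fin n} (hi : i ∈ B) :
    Function.extend Subtype.val x 0 i = 0 :=
  Function.extend_apply' _ _ _ fun ⟨a, ha⟩ => a.2 (ha ▸ hi)

theorem extend_val_eq_sum_add_of_mulVec {x y : {i // i ∉ B} → ℝ}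
    (h : (1 - interiorBlock P B) *ᵥ x = y) (i : {i // i ∉ B}) :
    Function.extend Subtype.val x 0 i.val =
      ∑ j, P i j * Function.extend Subtype.val x 0 j + y i := by
  rw [Subtype.val_injective.extend_apply, Fintype.sum_mul_extend_val, ← h,
    sub_mulVec, one_mulVec]
  simp [Matrix.mulVec, dotProduct]

theorem isUnit_one_sub_interiorBlock (hP0 : ∀ i j, 0 ≤ P i j) (hP1 : ∀ i, ∑ j, P i j = 1)
    (hreach : ReachesBias P bias) (hbB : bias ∈ B) : IsUnit (1 - interiorBlock P B) := by
  refine mulVec_injective_iff_isUnit.mp fun x x' hxx' => ?_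
  have hker : (1 - interiorBlock P B) *ᵥ (x - x') = 0 := by
    rw [mulVec_sub, hxx', sub_self]
  funext i
  have hzero := eq_zero_of_harmonic hP0 hP1 hreach hbB (fun j hj => extend_val_of_mem (x - x') hj)
    (fun j hj => by simpa using extend_val_eq_sum_add_of_mulVec hker ⟨j, hj⟩) i.val
  rw [Subtype.val_injective.extend_apply] at hzero
  exact sub_eq_zero.mp hzero

/-- The column `F_{· s}` of the fundamental matrix, extended by zero to the boundary `B`. -/
noncomputable def greenColumn (P : Matrix (Fin n) (Fin n) ℝ) (B : Finset (Fin n))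
    (s : {i // i ∉ B}) : Fin n → ℝ :=
  Function.extend Subtype.val (fun i => (1 - interiorBlock P B)⁻¹ i s) 0

theorem greenColumn_apply_of_notMem (s : {i // i ∉ B}) {i : Fin n} (hi : i ∉ B) :
    greenColumn P B s i = (1 - interiorBlock P B)⁻¹ ⟨i, hi⟩ s :=
  Subtype.val_injective.extend_apply _ _ ⟨i, hi⟩

theorem greenColumn_apply_of_mem (s : {i // i ∉ B}) {i : Fin n} (hi : i ∈ B) :
    greenColumn P B s i = 0 :=
  extend_val_of_mem _ hi

theorem greenColumn_eq_sum_add (hunit : IsUnit (1 - interiorBlock P B)) (s i : {i // i ∉ B}) :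
    greenColumn P B s i =
      ∑ j, P i j * greenColumn P B s j + (Pi.single s 1 : {i // i ∉ B} → ℝ) i := by
  refine extend_val_eq_sum_add_of_mulVec ?_ i
  have hcol : (fun i => (1 - interiorBlock P B)⁻¹ i s) =
      (1 - interiorBlock P B)⁻¹ *ᵥ Pi.single s 1 := (mulVec_single_one _ s).symm
  rw [hcol, mulVec_mulVec, mul_nonsing_inv _ ((isUnit_iff_isUnit_det _).mp hunit), one_mulVec]

theorem greenColumn_harmonic (hunit : IsUnit (1 - interiorBlock P B)) (s : {i // i ∉ B})
    {i : Fin n} (hiB : i ∉ B) (his : i ≠ s) :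
    greenColumn P B s i = ∑ j, P i j * greenColumn P B s j := by
  rw [greenColumn_eq_sum_add hunit s ⟨i, hiB⟩,
    Pi.single_eq_of_ne (fun h => his (congrArg Subtype.val h)), add_zero]

theorem one_le_inv_one_sub_interiorBlock_self (hP0 : ∀ i j, 0 ≤ P i j)
    (hP1 : ∀ i, ∑ j, P i j = 1) (hreach : ReachesBias P bias) (hbB : bias ∈ B)
    (s : {i // i ∉ B}) : 1 ≤ (1 - interiorBlock P B)⁻¹ s s := by
  have hG := greenColumn_eq_sum_add (isUnit_one_sub_interiorBlock hP0 hP1 hreach hbB) s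
  have hGnonneg : ∀ j, 0 ≤ greenColumn P B s j := by
    refine nonneg_of_superharmonic hP0 hP1 hreach hbB (fun j => greenColumn_apply_of_mem s)
      fun j hj => ?_
    rw [hG ⟨j, hj⟩, le_add_iff_nonneg_right, Pi.single_apply]
    split_ifs <;> norm_num
  calc (1 : ℝ) ≤ ∑ j, P s j * greenColumn P B s j + 1 :=
        le_add_of_nonneg_left (Finset.sum_nonneg fun j _ => mul_nonneg (hP0 s j) (hGnonneg j))
    _ = greenColumn P B s s := by rw [hG s, Pi.single_eq_same]
    _ = (1 - interiorBlock P B)⁻¹ s s := greenColumn_apply_of_notMem s s.2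

end GreenColumn

theorem IsHCEquilibrium.add_mul_of_harmonic {n : ℕ} {P : Matrix (Fin n) (Fin n) ℝ}
    {bias : Fin n} {S : Finset (Fin n)} {v G : Fin n → ℝ} {s : Fin n}
    (hv : IsHCEquilibrium P bias S v) (hGb : G bias = 0) (hGS : ∀ t ∈ S, G t = 0)
    (hGh : ∀ i, i ≠ bias → i ≠ s → i ∉ S → G i = ∑ j, P i j * G j) {c : ℝ}
    (hc : v s + c * G s = 1) :
    IsHCEquilibrium P bias (insert s S) (fun i => v i + c * G i) := by
  obtain ⟨hvb, hvS, hvh⟩ := hv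
  refine ⟨by simp [hvb, hGb], fun t ht => ?_, fun i hib hi => ?_⟩
  · rcases Finset.mem_insert.mp ht with rfl | ht
    · exact hc
    · simp [hvS t ht, hGS t ht]
  · rw [Finset.mem_insert, not_or] at hi
    simp only [mul_add, Finset.sum_add_distrib, mul_left_comm _ c, ← Finset.mul_sum,
      ← hvh i hib hi.2, ← hGh i hib hi.1 hi.2]

theorem hc_value_update_rule_general (n : ℕ) (P : Matrix (Fin n) (Fin n) ℝ)
    (hP0 : ∀ i j, 0 ≤ P i j) (hP1 : ∀ i, ∑ j, P i j = 1)
    (bias : Fin n) (hreach : ReachesBias P bias)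
    (S : Finset (Fin n))
    (s : Fin n)
    (hsmem : s ∉ insert bias S)
    (RS : Matrix {i : Fin n // i ∉ insert bias S}
      {i : Fin n // i ∉ insert bias S} ℝ)
    (hRS : RS = Matrix.of fun i j => P i.val j.val)
    (F : Matrix {i : Fin n // i ∉ insert bias S}
      {i : Fin n // i ∉ insert bias S} ℝ)
    (hF : F = (1 - RS)⁻¹)
    (vS vSs : Fin n → ℝ)
    (hvS : IsHCEquilibrium P bias S vS)
    (hvSs : IsHCEquilibrium P bias (insert s S) vSs) :
    ∀ i : Fin n, ∀ hi : i ∉ insert bias S, i ≠ s →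
      vSs i = vS i +
        (1 - vS s) * F ⟨i, hi⟩ ⟨s, hsmem⟩ / F ⟨s, hsmem⟩ ⟨s, hsmem⟩ := by
  intro i hi _
  have hF' : F = (1 - interiorBlock P (insert bias S))⁻¹ := by subst hRS; exact hF
  have hbB : bias ∈ insert bias S := Finset.mem_insert_self bias S
  have hunit := isUnit_one_sub_interiorBlock hP0 hP1 hreach hbB
  set s' : {i // i ∉ insert bias S} := ⟨s, hsmem⟩
  have hFss : F s' s' ≠ 0 :=
    (zero_lt_one.trans_le (hF' ▸ one_le_inv_one_sub_interiorBlock_self hP0 hP1 hreach hbB s')).ne'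
  have hupdate : IsHCEquilibrium P bias (insert s S)
      (fun j => vS j + (1 - vS s) / F s' s' * greenColumn P (insert bias S) s' j) := by
    refine hvS.add_mul_of_harmonic (greenColumn_apply_of_mem s' hbB)
      (fun t ht => greenColumn_apply_of_mem s' (Finset.mem_insert_of_mem ht))
      (fun j hjb hjs hjS => greenColumn_harmonic hunit s' (by simp [hjb, hjS]) hjs) ?_
    rw [greenColumn_apply_of_notMem s' hsmem, ← hF', div_mul_cancel₀ _ hFss]
    ring
  calc vSs i = vS i + (1 - vS s) / F s' s' * greenColumn P (insert bias S) s' i :=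
        congrFun (IsHCEquilibrium.unique hP0 hP1 hreach hvSs hupdate) i
    _ = _ := by rw [greenColumn_apply_of_notMem s' hi, ← hF', div_mul_eq_mul_div]

/-- Value update rule. After adding seed `s` to seed set `S`,
for every interior node `i ≠ s`:
`v^{S∪{s}} i = v^S i + (1 - v^S s) · F^S_{is} / F^S_{ss}`. -/
theorem hc_value_update_rule (n : ℕ) (P : Matrix (Fin n) (Fin n) ℝ)
    (hP0 : ∀ i j, 0 ≤ P i j) (hP1 : ∀ i, ∑ j, P i j = 1)
    (bias : Fin n) (hreach : ReachesBias P bias)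
    (S : Finset (Fin n)) (hbS : bias ∉ S)
    (s : Fin n) (hsS : s ∉ S) (hsb : s ≠ bias)
    (hsmem : s ∉ insert bias S)
    (RS : Matrix {i : Fin n // i ∉ insert bias S}
      {i : Fin n // i ∉ insert bias S} ℝ)
    (hRS : RS = Matrix.of fun i j => P i.val j.val)
    (F : Matrix {i : Fin n // i ∉ insert bias S}
      {i : Fin n // i ∉ insert bias S} ℝ)
    (hF : F = (1 - RS)⁻¹)
    (vS vSs : Fin n → ℝ)
    (hvS : IsHCEquilibrium P bias S vS)
    (hvSs : IsHCEquilibrium P bias (insert s S) vSs) :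
    ∀ i : Fin n, ∀ hi : i ∉ insert bias S, i ≠ s →
      vSs i = vS i +
        (1 - vS s) * F ⟨i, hi⟩ ⟨s, hsmem⟩ / F ⟨s, hsmem⟩ ⟨s, hsmem⟩ :=
  hc_value_update_rule_general n P hP0 hP1 bias hreach S s hsmem RS hRS F hF vS vSs hvS hvSs
end
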